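/- Every pairwise-optimal partition is a centroidal Voronoi partition: if P is a connected N-partition such that for every pair of adjacent regions (i,j), H_one(Cd(P_i); P_i) + H_one(Cd(P_j); P_j) equals the minimum over all pairs (a,b) ∈ (P_i ∪ P_j)² of Σ_{k ∈ P_i∪P_j} min{d_{P_i∪P_j}(a,k), d_{P_i∪P_j}(b,k)} φ(k), then for every i and every x ∈ P_i and every j, d_G(x, Cd(P_i)) ≤ d_G(x, Cd(P_j)). -/

import Mathlib

open scoped Classical ENNReal

noncomputable section

variable {V : Type*}

/-- Weighted length of a walk. -/
def wlen (w : V → V → ℝ≥0∞) {G : SimpleGraph V} {u v : V} (p : G.Walk u v) : ℝ≥0∞ :=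
  (p.darts.map fun d => w d.fst d.snd).sum

/-- Shortest weighted path distance in a graph (`⊤` if no path). -/
def gdist (G : SimpleGraph V) (w : V → V → ℝ≥0∞) (u v : V) : ℝ≥0∞ :=
  ⨅ p : G.Walk u v, wlen w p

/-- Distance in the subgraph induced on `A`. -/
def sdist (G : SimpleGraph V) (w : V → V → ℝ≥0∞) (A : Set V) (u v : A) : ℝ≥0∞ :=
  gdist (G.induce A) (fun a b => w a.1 b.1) u v

/-- Distance in the induced subgraph, as a function on `V` (`⊤` off `A`). -/
def dIn (G : SimpleGraph V) (w : V → V → ℝ≥0∞) (A : Set V) (u v : V) : ℝ≥0∞ :=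
  if h : u ∈ A ∧ v ∈ A then sdist G w A ⟨u, h.1⟩ ⟨v, h.2⟩ else ⊤

/-- One-center coverage cost of region `A` from vertex `h`. -/
def HoneV (G : SimpleGraph V) (w : V → V → ℝ≥0∞) (φ : V → ℝ≥0∞) (A : Set V) (h : V) : ℝ≥0∞ :=
  ∑ᶠ k ∈ A, dIn G w A h k * φ k

/-- Set of minimizers of the one-center cost over `A`. -/
def centerSet (G : SimpleGraph V) (w : V → V → ℝ≥0∞) (φ : V → ℝ≥0∞) (A : Set V) : Set V :=
  {h | h ∈ A ∧ ∀ k ∈ A, HoneV G w φ A h ≤ HoneV G w φ A k}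

/-- Generalized centroid: least element of the argmin set. -/
def Cd [Fintype V] [LinearOrder V] [Nonempty V] (G : SimpleGraph V) (w : V → V → ℝ≥0∞)
    (φ : V → ℝ≥0∞) (A : Set V) : V :=
  if hne : (centerSet G w φ A).toFinset.Nonempty then (centerSet G w φ A).toFinset.min' hne
  else Classical.arbitrary V

/-! Let `A`, `B` be adjacent regions with centroids `a`, `b`. Term by term, the two-centre cost of
`A ∪ B` at `(a, b)` is at most the one-centre cost of `A` at `a` plus that of `B` at `b`; pairwise
optimality makes the (finite) totals agree, so the terms agree, and hence every `x ∈ A` is at least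
as close to `a` inside `A` as to `b` inside `A ∪ B`.

To see that `x ∈ P i` is closest to its own centroid, follow a shortest walk from `x` to a nearest
centroid. Every tail of it is again a shortest walk to a nearest centroid, so by induction on the
walk each vertex on it is, inside its own region, within the remaining length of its own centroid;
a step across a region boundary is handled by the inequality above. -/

section

open SimpleGraph

variable {G : SimpleGraph V} {w : V → V → ℝ≥0∞}

@[simp] lemma wlen_nil {u : V} : wlen w (Walk.nil : G.Walk u u) = 0 := by
  simp [wlen]

@[simp] lemma wlen_cons {u v x : V} (h : G.Adj u v) (p : G.Walk v x) :
    wlen w (Walk.cons h p) = w u v + wlen w p := by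
  simp [wlen]

lemma wlen_append {u v x : V} (p : G.Walk u v) (q : G.Walk v x) :
    wlen w (p.append q) = wlen w p + wlen w q := by
  simp [wlen, Walk.darts_append]

lemma wlen_bypass_le [DecidableEq V] {u v : V} (p : G.Walk u v) :
    wlen w p.bypass ≤ wlen w p :=
  ((Walk.darts_bypass_sublist_darts p).map _).sum_le_sum fun _ _ => bot_le

lemma wlen_ne_top (hfin : ∀ u v, G.Adj u v → w u v ≠ ⊤) {u v : V} (p : G.Walk u v) :
    wlen w p ≠ ⊤ := by
  induction p with
  | nil => simp
  | cons h p ih => simpa [wlen_cons, ENNReal.add_ne_top] using ⟨hfin _ _ h, ih⟩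

lemma gdist_le_wlen {u v : V} (p : G.Walk u v) : gdist G w u v ≤ wlen w p :=
  iInf_le _ p

@[simp] lemma gdist_self {u : V} : gdist G w u u = 0 :=
  nonpos_iff_eq_zero.1 (by simpa using gdist_le_wlen (w := w) (Walk.nil : G.Walk u u))

lemma gdist_le_of_adj {u v : V} (h : G.Adj u v) : gdist G w u v ≤ w u v := by
  simpa using gdist_le_wlen (w := w) (Walk.cons h Walk.nil)

lemma gdist_triangle (u v x : V) : gdist G w u x ≤ gdist G w u v + gdist G w v x := by
  simp only [gdist, ENNReal.iInf_add, ENNReal.add_iInf]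
  exact le_iInf₂ fun q p => (gdist_le_wlen (p.append q)).trans_eq (wlen_append p q)

lemma gdist_comm (hsym : ∀ u v, w u v = w v u) (u v : V) : gdist G w u v = gdist G w v u := by
  have key : ∀ a b : V, gdist G w a b ≤ gdist G w b a := fun a b =>
    le_iInf fun p => (gdist_le_wlen p.reverse).trans_eq <| by
      simp only [wlen, Walk.darts_reverse, List.map_reverse, List.sum_reverse, List.map_map]
      exact congr_arg List.sum (List.map_congr_left fun d _ => (hsym _ _).symm)
  exact (key u v).antisymm (key v u)

lemma gdist_ne_top (hfin : ∀ u v, G.Adj u v → w u v ≠ ⊤) {u v : V} (h : G.Reachable u v) :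
    gdist G w u v ≠ ⊤ :=
  let ⟨p⟩ := h
  ne_top_of_le_ne_top (wlen_ne_top hfin p) (gdist_le_wlen p)

lemma exists_wlen_eq_gdist [Fintype V] {u v : V} (h : G.Reachable u v) :
    ∃ p : G.Walk u v, wlen w p = gdist G w u v := by
  classical
  have : Nonempty (G.Path u v) := let ⟨p⟩ := h; ⟨⟨p.bypass, p.bypass_isPath⟩⟩
  obtain ⟨q, hq⟩ := Finite.exists_min (α := G.Path u v) (fun q => wlen w q.1)
  exact ⟨q.1, le_antisymm (le_iInf fun p =>
    (hq ⟨p.bypass, p.bypass_isPath⟩).trans (wlen_bypass_le p)) (gdist_le_wlen _)⟩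

lemma gdist_map_le {V' : Type*} {G' : SimpleGraph V'} {w' : V' → V' → ℝ≥0∞} (f : G →g G')
    (hw : ∀ a b, G.Adj a b → w' (f a) (f b) = w a b) (u v : V) :
    gdist G' w' (f u) (f v) ≤ gdist G w u v :=
  le_iInf fun p => (gdist_le_wlen (p.map f)).trans_eq <| by
    simp only [wlen, Walk.darts_map, List.map_map]
    exact congr_arg List.sum (List.map_congr_left fun d _ => hw _ _ d.adj)

end

section

variable {G : SimpleGraph V} {w : V → V → ℝ≥0∞} {A : Set V}

lemma dIn_of_mem {u v : V} (hu : u ∈ A) (hv : v ∈ A) :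
    dIn G w A u v = sdist G w A ⟨u, hu⟩ ⟨v, hv⟩ :=
  dif_pos ⟨hu, hv⟩

lemma dIn_self {u : V} (hu : u ∈ A) : dIn G w A u u = 0 := by
  rw [dIn_of_mem hu hu, sdist, gdist_self]

lemma gdist_le_dIn (u v : V) : gdist G w u v ≤ dIn G w A u v := by
  by_cases h : u ∈ A ∧ v ∈ A
  · rw [dIn_of_mem h.1 h.2, sdist]
    exact gdist_map_le (SimpleGraph.Embedding.induce A).toHom (fun _ _ _ => rfl) _ _
  · simp [dIn, h]

lemma dIn_anti {B : Set V} (hAB : A ⊆ B) (u v : V) : dIn G w B u v ≤ dIn G w A u v := by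
  by_cases h : u ∈ A ∧ v ∈ A
  · rw [dIn_of_mem h.1 h.2, dIn_of_mem (hAB h.1) (hAB h.2), sdist, sdist]
    exact gdist_map_le (w' := fun a b : B => w a b)
      ⟨Set.inclusion hAB, id⟩ (fun _ _ _ => rfl) ⟨u, h.1⟩ ⟨v, h.2⟩
  · simp [dIn, h]

lemma dIn_triangle {u v x : V} (hu : u ∈ A) (hv : v ∈ A) (hx : x ∈ A) :
    dIn G w A u x ≤ dIn G w A u v + dIn G w A v x := by
  rw [dIn_of_mem hu hx, dIn_of_mem hu hv, dIn_of_mem hv hx]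
  exact gdist_triangle _ _ _

lemma dIn_comm (hsym : ∀ u v, w u v = w v u) (u v : V) : dIn G w A u v = dIn G w A v u := by
  by_cases h : u ∈ A ∧ v ∈ A
  · rw [dIn_of_mem h.1 h.2, dIn_of_mem h.2 h.1, sdist, sdist]
    exact gdist_comm (fun _ _ => hsym _ _) _ _
  · simp [dIn, h, and_comm]

lemma dIn_le_of_adj {u v : V} (hu : u ∈ A) (hv : v ∈ A) (h : G.Adj u v) :
    dIn G w A u v ≤ w u v := by
  rw [dIn_of_mem hu hv, sdist]
  exact gdist_le_of_adj (G := G.induce A) (by simpa using h)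

lemma dIn_ne_top (hfin : ∀ u v, G.Adj u v → w u v ≠ ⊤) (hA : (G.induce A).Connected)
    {u v : V} (hu : u ∈ A) (hv : v ∈ A) : dIn G w A u v ≠ ⊤ := by
  rw [dIn_of_mem hu hv, sdist]
  exact gdist_ne_top (G := G.induce A) (fun a b hab => hfin a b hab) (hA ⟨u, hu⟩ ⟨v, hv⟩)

end

lemma ENNReal.le_of_sum_le_sum {α : Type*} {s : Finset α} {f g : α → ℝ≥0∞}
    (hfg : ∀ a ∈ s, f a ≤ g a) (hsum : ∑ a ∈ s, g a ≤ ∑ a ∈ s, f a) (hg : ∑ a ∈ s, g a ≠ ⊤)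
    {a : α} (ha : a ∈ s) : g a ≤ f a := by
  rw [← Finset.add_sum_erase s f ha, ← Finset.add_sum_erase s g ha] at hsum
  rw [← Finset.add_sum_erase s g ha] at hg
  have hrest : ∑ b ∈ s.erase a, f b ≤ ∑ b ∈ s.erase a, g b :=
    Finset.sum_le_sum fun b hb => hfg b (Finset.mem_of_mem_erase hb)
  exact ENNReal.le_of_add_le_add_right (ENNReal.add_ne_top.1 hg).2 (hsum.trans (by gcongr))

section

variable [Fintype V] {G : SimpleGraph V} {w : V → V → ℝ≥0∞} {φ : V → ℝ≥0∞}

lemma HoneV_eq_sum (A : Set V) (h : V) :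
    HoneV G w φ A h = ∑ k ∈ A.toFinset, dIn G w A h k * φ k :=
  finsum_mem_eq_toFinset_sum _ _

lemma HoneV_ne_top (hfin : ∀ u v, G.Adj u v → w u v ≠ ⊤) (hφ : ∀ k, φ k ≠ ⊤) {A : Set V}
    (hA : (G.induce A).Connected) {h : V} (hh : h ∈ A) : HoneV G w φ A h ≠ ⊤ := by
  rw [HoneV_eq_sum, ← lt_top_iff_ne_top, ENNReal.sum_lt_top]
  intro k hk
  exact ENNReal.mul_lt_top (dIn_ne_top hfin hA hh (Set.mem_toFinset.1 hk)).lt_top (hφ k).lt_top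

lemma Cd_mem [LinearOrder V] [Nonempty V] {A : Set V} (hA : A.Nonempty) : Cd G w φ A ∈ A := by
  obtain ⟨h, hh, hmin⟩ := A.exists_min_image (HoneV G w φ A) A.toFinite hA
  have hne : (centerSet G w φ A).toFinset.Nonempty := ⟨h, Set.mem_toFinset.2 ⟨hh, hmin⟩⟩
  rw [Cd, dif_pos hne]
  exact (Set.mem_toFinset.1 (Finset.min'_mem _ hne)).1

lemma dIn_le_dIn_union_of_HoneV_add_le (hfin : ∀ u v, G.Adj u v → w u v ≠ ⊤)
    (hφ₀ : ∀ k, φ k ≠ 0) (hφ : ∀ k, φ k ≠ ⊤) {A B : Set V} (hAB : Disjoint A B)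
    (hA : (G.induce A).Connected) (hB : (G.induce B).Connected) {a b : V} (ha : a ∈ A)
    (hb : b ∈ B)
    (hopt : HoneV G w φ A a + HoneV G w φ B b ≤
      ∑ᶠ k ∈ A ∪ B, min (dIn G w (A ∪ B) a k) (dIn G w (A ∪ B) b k) * φ k)
    {x : V} (hx : x ∈ A) : dIn G w A a x ≤ dIn G w (A ∪ B) b x := by
  set m : V → ℝ≥0∞ := fun k => min (dIn G w (A ∪ B) a k) (dIn G w (A ∪ B) b k) * φ k
  have hmA : ∀ k ∈ A.toFinset, m k ≤ dIn G w A a k * φ k := fun k _ => by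
    simp only [m]
    gcongr
    exact min_le_of_left_le (dIn_anti (Set.subset_union_left : A ⊆ A ∪ B) a k)
  have hmB : ∀ k ∈ B.toFinset, m k ≤ dIn G w B b k * φ k := fun k _ => by
    simp only [m]
    gcongr
    exact min_le_of_right_le (dIn_anti (Set.subset_union_right : B ⊆ A ∪ B) b k)
  have hHA := HoneV_ne_top hfin hφ hA ha
  have hHB := HoneV_ne_top hfin hφ hB hb
  rw [HoneV_eq_sum, HoneV_eq_sum, finsum_mem_eq_toFinset_sum, Set.toFinset_union,
    Finset.sum_union (Set.disjoint_toFinset.2 hAB)] at hopt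
  rw [HoneV_eq_sum] at hHA hHB
  have hsumA : ∑ k ∈ A.toFinset, dIn G w A a k * φ k ≤ ∑ k ∈ A.toFinset, m k :=
    ENNReal.le_of_add_le_add_right hHB (hopt.trans (add_le_add le_rfl (Finset.sum_le_sum hmB)))
  have hmx := ENNReal.le_of_sum_le_sum hmA hsumA hHA (Set.mem_toFinset.2 hx)
  refine (ENNReal.mul_le_mul_iff_left (hφ₀ x) (hφ x)).1 (hmx.trans ?_)
  simp only [m]
  gcongr
  exact min_le_right _ _

end

section

open Function

variable {ι : Type*} {G : SimpleGraph V} {w : V → V → ℝ≥0∞} {P : ι → Set V} {c : ι → V}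

lemma dIn_center_le_wlen_of_nearest (hfin : ∀ u v, G.Adj u v → w u v ≠ ⊤)
    (hc : ∀ t, c t ∈ P t) (hdisj : Pairwise (Disjoint on P)) (hcover : ∀ v, ∃ t, v ∈ P t)
    (hloc : ∀ s t, s ≠ t → ∀ z ∈ P s, ∀ y ∈ P t, G.Adj z y →
      dIn G w (P s) z (c s) ≤ dIn G w (P s ∪ P t) z (c t))
    {z u : V} {t : ι} (p : G.Walk z u) (hu : c t = u)
    (hp : ∀ t', wlen w p ≤ gdist G w z (c t')) {s : ι} (hz : z ∈ P s) :
    dIn G w (P s) z (c s) ≤ wlen w p := by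
  induction p generalizing s with
  | nil =>
    have hst : s = t := by_contra fun hst => Set.disjoint_left.1 (hdisj hst) hz (hu ▸ hc t)
    subst hst hu
    simp [dIn_self hz]
  | @cons z y u hzy q ih =>
    have hq : ∀ t', wlen w q ≤ gdist G w y (c t') := fun t' =>
      (ENNReal.add_le_add_iff_left (hfin _ _ hzy)).1 <| calc
        w z y + wlen w q = wlen w (.cons hzy q) := (wlen_cons hzy q).symm
        _ ≤ gdist G w z (c t') := hp t'
        _ ≤ gdist G w z y + gdist G w y (c t') := gdist_triangle _ _ _
        _ ≤ w z y + gdist G w y (c t') := by gcongr; exact gdist_le_of_adj hzy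
    obtain ⟨s', hy⟩ := hcover y
    have hyc := ih hu hq hy
    rw [wlen_cons]
    rcases eq_or_ne s s' with rfl | hss'
    · calc dIn G w (P s) z (c s) ≤ dIn G w (P s) z y + dIn G w (P s) y (c s) :=
            dIn_triangle hz hy (hc s)
        _ ≤ w z y + wlen w q := add_le_add (dIn_le_of_adj hz hy hzy) hyc
    · calc dIn G w (P s) z (c s) ≤ dIn G w (P s ∪ P s') z (c s') := hloc s s' hss' z hz y hy hzy
        _ ≤ dIn G w (P s ∪ P s') z y + dIn G w (P s ∪ P s') y (c s') :=
            dIn_triangle (Or.inl hz) (Or.inr hy) (Or.inr (hc s'))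
        _ ≤ w z y + wlen w q :=
            add_le_add (dIn_le_of_adj (Or.inl hz) (Or.inr hy) hzy)
              ((dIn_anti Set.subset_union_right _ _).trans hyc)

theorem gdist_center_le_of_adj_dIn_le [Fintype V] [Finite ι] (hG : G.Connected)
    (hfin : ∀ u v, G.Adj u v → w u v ≠ ⊤)
    (hc : ∀ t, c t ∈ P t) (hdisj : Pairwise (Disjoint on P)) (hcover : ∀ v, ∃ t, v ∈ P t)
    (hloc : ∀ s t, s ≠ t → ∀ z ∈ P s, ∀ y ∈ P t, G.Adj z y →
      dIn G w (P s) z (c s) ≤ dIn G w (P s ∪ P t) z (c t))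
    {s : ι} {x : V} (hx : x ∈ P s) (t : ι) :
    gdist G w x (c s) ≤ gdist G w x (c t) := by
  have : Nonempty ι := ⟨s⟩
  obtain ⟨t₀, ht₀⟩ := Finite.exists_min fun t => gdist G w x (c t)
  obtain ⟨p, hp⟩ := exists_wlen_eq_gdist (w := w) (hG.preconnected x (c t₀))
  calc gdist G w x (c s) ≤ dIn G w (P s) x (c s) := gdist_le_dIn _ _
    _ ≤ wlen w p :=
        dIn_center_le_wlen_of_nearest hfin hc hdisj hcover hloc p rfl (fun t' => hp ▸ ht₀ t') hx
    _ = gdist G w x (c t₀) := hp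
    _ ≤ gdist G w x (c t) := ht₀ t

end

/-- Every pairwise-optimal partition is a centroidal Voronoi partition. -/
theorem stmt9 [Fintype V] [LinearOrder V] [Nonempty V] (G : SimpleGraph V) (hG : G.Connected)
    (w : V → V → ℝ≥0∞) (hsym : ∀ u v, w u v = w v u)
    (hpos : ∀ u v, G.Adj u v → 0 < w u v ∧ w u v ≠ ⊤)
    (φ : V → ℝ≥0∞) (hφ : ∀ k, 0 < φ k ∧ φ k ≠ ⊤)
    (N : ℕ) (P : Fin N → Set V)
    (hcover : (⋃ i, P i) = Set.univ)
    (hdisj : ∀ i j, i ≠ j → Disjoint (P i) (P j))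
    (hne : ∀ i, (P i).Nonempty)
    (hconn : ∀ i, (G.induce (P i)).Connected)
    (hpo : ∀ i j, i ≠ j → (∃ qi ∈ P i, ∃ qj ∈ P j, G.Adj qi qj) →
      HoneV G w φ (P i) (Cd G w φ (P i)) + HoneV G w φ (P j) (Cd G w φ (P j)) =
        ⨅ (a : (P i ∪ P j : Set V)) (b : (P i ∪ P j : Set V)),
          ∑ᶠ k ∈ P i ∪ P j,
            min (dIn G w (P i ∪ P j) (a : V) k) (dIn G w (P i ∪ P j) (b : V) k) * φ k) :
    ∀ i, ∀ x ∈ P i, ∀ j,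
      gdist G w x (Cd G w φ (P i)) ≤ gdist G w x (Cd G w φ (P j)) := by
  have hfin : ∀ u v, G.Adj u v → w u v ≠ ⊤ := fun u v h => (hpos u v h).2
  have hc : ∀ t, Cd G w φ (P t) ∈ P t := fun t => Cd_mem (hne t)
  have hloc : ∀ s t, s ≠ t → ∀ z ∈ P s, ∀ y ∈ P t, G.Adj z y →
      dIn G w (P s) z (Cd G w φ (P s)) ≤ dIn G w (P s ∪ P t) z (Cd G w φ (P t)) := by
    intro s t hst z hz y hy hzy
    rw [dIn_comm hsym, dIn_comm hsym (A := P s ∪ P t)]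
    refine dIn_le_dIn_union_of_HoneV_add_le hfin (fun k => (hφ k).1.ne') (fun k => (hφ k).2)
      (hdisj s t hst) (hconn s) (hconn t) (hc s) (hc t) ?_ hz
    rw [hpo s t hst ⟨z, hz, y, hy, hzy⟩]
    exact iInf₂_le_of_le (⟨Cd G w φ (P s), Or.inl (hc s)⟩ : (P s ∪ P t : Set V))
      ⟨Cd G w φ (P t), Or.inr (hc t)⟩ le_rfl
  intro i x hx j
  exact gdist_center_le_of_adj_dIn_le hG hfin hc hdisj (Set.iUnion_eq_univ_iff.1 hcover) hloc hx j
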